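/- In the representation ring R of U_h(sl_2) over Q(v), the product of Habiro's basis elements satisfies P̃'_m · P̃'_n = ∑_{k=0}^{min(m,n)} q^{-kl} ({m+n}_q! / ({k}_q! {m-k}_q! {n-k}_q!)) P̃'_l, where l = m + n - k, and the coefficient C_{k,m,n}(q) = ({2m+1}_{q,m+1}/{1}_q) · {k}_q! {n-k}_q! [2l+1 choose 2m+1]_q [2(n-k) choose n-k]_q [m+n choose k]_q [m choose k]_q lies in the ideal ({2m+1}_{q,m+1}/{1}_q) · I_n of Z[q,q^{-1}]. -/

import Mathlib

/-!
Statement 18: In the representation ring R ≅ ℚ(v)[V₂] of U_h(sl₂),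
P̃'_m · P̃'_n = ∑_{k=0}^{min(m,n)} q^{-kl} ({m+n}_q!/({k}_q!{m-k}_q!{n-k}_q!)) P̃'_l with
l = m+n-k; and the coefficient C_{k,m,n}(q) lies in ({2m+1}_{q,m+1}/{1}_q)·I_n ⊆ ℤ[q,q⁻¹].
-/

open Finset Polynomial

noncomputable section

/-- The field ℚ(v). -/
abbrev Fv : Type := RatFunc ℚ

/-- the variable v -/
def vv : Fv := RatFunc.X

/-- q = v² -/
def qq : Fv := vv ^ 2

/-- `{i}_q = q^i - 1` in ℚ(v). -/
def qIntF (i : ℤ) : Fv := qq ^ i - 1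

/-- `{i}_{q,n}` in ℚ(v). -/
def qPochF (i : ℤ) (n : ℕ) : Fv := ∏ k ∈ range n, qIntF (i - k)

/-- `{n}_q!` in ℚ(v). -/
def qFactF (n : ℕ) : Fv := qPochF n n

/-- Habiro's basis element `P̃'_l = (v^l/{l}_q!) ∏_{i=0}^{l-1}(V₂ - v^{2i+1} - v^{-2i-1})`,
viewed in the representation ring ℚ(v)[V₂] with `V₂ = X`. -/
def Pt (l : ℕ) : Polynomial Fv :=
  C (vv ^ l / qFactF l) *
    ∏ i ∈ range l, (X - C (vv ^ (2 * (i : ℤ) + 1)) - C (vv ^ (-(2 * (i : ℤ) + 1))))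

/-- `{i}_q = q^i - 1` in `ℤ[q,q⁻¹]`. -/
def qInt (i : ℤ) : LaurentPolynomial ℤ := LaurentPolynomial.T i - 1

/-- `{i}_{q,n}` in `ℤ[q,q⁻¹]`. -/
def qPoch (i : ℤ) (n : ℕ) : LaurentPolynomial ℤ := ∏ k ∈ range n, qInt (i - k)

/-- `{n}_q!` in `ℤ[q,q⁻¹]`. -/
def qFact (n : ℕ) : LaurentPolynomial ℤ := qPoch n n

/-- The ideal `I_l` of `ℤ[q,q⁻¹]`. -/
def Iideal (l : ℕ) : Ideal (LaurentPolynomial ℤ) :=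
  Ideal.span {x | ∃ k ≤ l, x = qFact (l - k) * qFact k}

/-!
Put `w_i = v^{2i+1} + v^{-2i-1}`. Since `P̃'_{l+1} = (v/{l+1}_q) (V₂ - w_l) P̃'_l`, multiplication
by `V₂ - w_n` acts on Habiro's basis by
`(V₂ - w_n) P̃'_l = ({l+1}_q/v) P̃'_{l+1} + (w_l - w_n) P̃'_l`, where
`v (w_{n+j} - w_n) = q^{-(n+j)} {j}_q {2n+j+1}_q`.
Writing `P̃'_m P̃'_{n+1} = (v/{n+1}_q) (V₂ - w_n) P̃'_m P̃'_n`, the product formula follows by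
induction on `n ≤ m`, the coefficients obeying a three-term recursion.
The membership claim needs no computation: the coefficient is `g {k}_q! {n-k}_q!` times
Laurent polynomials, and `{n-k}_q! {k}_q!` is one of the generators of `I_n`.
-/

lemma sum_range_succ_add_sum_range_succ {M : Type*} [AddCommMonoid M] (f g h : ℕ → M) (n : ℕ)
    (h_zero : f 0 = h 0) (h_succ : ∀ i < n, f (i + 1) + g i = h (i + 1))
    (h_last : g n = h (n + 1)) :
    ∑ k ∈ range (n + 1), f k + ∑ k ∈ range (n + 1), g k = ∑ k ∈ range (n + 2), h k := by
  rw [sum_range_succ', sum_range_succ g, sum_range_succ' h, sum_range_succ (fun k => h (k + 1)),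
    ← sum_congr rfl fun i hi => h_succ i (mem_range.1 hi), sum_add_distrib, h_zero, h_last]
  abel

lemma vv_ne_zero : vv ≠ 0 := RatFunc.X_ne_zero

lemma qq_ne_zero : qq ≠ 0 := pow_ne_zero 2 vv_ne_zero

lemma qq_pow_ne_one {t : ℕ} (ht : t ≠ 0) : qq ^ t ≠ 1 := by
  intro h
  have hX : (X ^ (2 * t) : ℚ[X]) = 1 :=
    RatFunc.algebraMap_injective ℚ (by simpa [qq, vv, ← pow_mul] using h)
  simpa [ht] using congrArg natDegree hX

lemma qIntF_natCast (t : ℕ) : qIntF t = qq ^ t - 1 := by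
  rw [qIntF, zpow_natCast]

lemma qIntF_natCast_ne_zero {t : ℕ} (ht : t ≠ 0) : qIntF t ≠ 0 := by
  rw [qIntF_natCast]
  exact sub_ne_zero.2 (qq_pow_ne_one ht)

lemma qFactF_zero : qFactF 0 = 1 := by simp [qFactF, qPochF]

lemma qFactF_succ (t : ℕ) : qFactF (t + 1) = qIntF (t + 1 : ℕ) * qFactF t := by
  rw [qFactF, qFactF, qPochF, qPochF, prod_range_succ', mul_comm]
  congr 1
  exact prod_congr rfl fun k _ => by push_cast; ring_nf

lemma qFactF_ne_zero (n : ℕ) : qFactF n ≠ 0 := by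
  induction n with
  | zero => simp [qFactF_zero]
  | succ n ih => exact qFactF_succ n ▸ mul_ne_zero (qIntF_natCast_ne_zero n.succ_ne_zero) ih

def habiroRoot (i : ℕ) : Fv := vv ^ (2 * i + 1) + (vv ^ (2 * i + 1))⁻¹

lemma vv_mul_habiroRoot_sub (i j : ℕ) :
    vv * (habiroRoot (i + j) - habiroRoot i) =
      qIntF j * qIntF (2 * i + j + 1 : ℕ) / qq ^ (i + j) := by
  have := vv_ne_zero
  simp only [habiroRoot, qIntF_natCast, qq]
  field_simp
  ring

lemma Pt_eq_prod (l : ℕ) :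
    Pt l = C (vv ^ l / qFactF l) * ∏ i ∈ range l, (X - C (habiroRoot i)) := by
  simp only [Pt, habiroRoot, map_add, sub_sub, zpow_neg]
  norm_cast

lemma Pt_zero : Pt 0 = 1 := by simp [Pt, qFactF_zero]

lemma Pt_succ (l : ℕ) :
    Pt (l + 1) = C (vv / qIntF (l + 1 : ℕ)) * ((X - C (habiroRoot l)) * Pt l) := by
  rw [Pt_eq_prod, Pt_eq_prod, prod_range_succ, qFactF_succ, pow_succ', mul_div_mul_comm, C_mul]
  ring

lemma C_mul_X_sub_C_habiroRoot_mul_Pt (c : Fv) (i l : ℕ) :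
    C (vv * c) * ((X - C (habiroRoot i)) * Pt l) =
      C (c * qIntF (l + 1 : ℕ)) * Pt (l + 1) +
        C (c * (vv * (habiroRoot l - habiroRoot i))) * Pt l := by
  have hl : C (c * qIntF (l + 1 : ℕ)) * Pt (l + 1) =
      C (vv * c) * ((X - C (habiroRoot l)) * Pt l) := by
    have := qIntF_natCast_ne_zero l.succ_ne_zero
    rw [Pt_succ, ← mul_assoc, ← C_mul]
    congr 2
    field_simp [vv_ne_zero]
  rw [hl, C_mul, C_mul, C_mul, map_sub]
  ring

def habiroCoeff (k m n : ℕ) : Fv :=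
  qq ^ (-((k : ℤ) * ((m : ℤ) + n - k))) *
    (qFactF (m + n) / (qFactF k * qFactF (m - k) * qFactF (n - k)))

lemma habiroCoeff_comm (k m n : ℕ) : habiroCoeff k m n = habiroCoeff k n m := by
  simp only [habiroCoeff, add_comm (m : ℤ), add_comm m]
  ring

lemma habiroCoeff_eq {k m n a b : ℕ} (hm : k + a = m) (hn : k + b = n) :
    habiroCoeff k m n =
      qFactF (m + n) / (qq ^ (k * (k + a + b)) * qFactF k * qFactF a * qFactF b) := by
  subst hm hn
  rw [habiroCoeff,
    show -((k : ℤ) * ((k + a : ℕ) + (k + b : ℕ) - k)) = -((k * (k + a + b) : ℕ) : ℤ) by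
      push_cast; ring,
    zpow_neg, zpow_natCast, Nat.add_sub_cancel_left, Nat.add_sub_cancel_left]
  ring

lemma habiroCoeff_zero_succ (m n : ℕ) :
    habiroCoeff 0 m n / qIntF (n + 1 : ℕ) * qIntF (m + n + 1 : ℕ) =
      habiroCoeff 0 m (n + 1) := by
  have := qIntF_natCast_ne_zero n.succ_ne_zero
  rw [habiroCoeff_eq (zero_add m) (zero_add n), habiroCoeff_eq (zero_add m) (zero_add (n + 1)),
    ← add_assoc, qFactF_succ, qFactF_succ]
  field_simp [qFactF_ne_zero]
  ring

/-- After clearing denominators this is `q^a {b}_q {c}_q + {a+b+c}_q {a}_q = {a+b}_q {a+c}_q`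
with `a = i + 1`, `b = m + n - i`, `c = n - i`. -/
lemma habiroCoeff_succ_succ {i m n : ℕ} (hm : i < m) (hn : i < n) :
    habiroCoeff (i + 1) m n / qIntF (n + 1 : ℕ) * qIntF (m + n - i : ℕ) +
        habiroCoeff i m n / qIntF (n + 1 : ℕ) * (vv * (habiroRoot (m + n - i) - habiroRoot n)) =
      habiroCoeff (i + 1) m (n + 1) := by
  obtain ⟨a, rfl⟩ : ∃ a, n = i + 1 + a := ⟨n - (i + 1), by omega⟩
  obtain ⟨b, rfl⟩ : ∃ b, m = i + 1 + b := ⟨m - (i + 1), by omega⟩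
  rw [show i + 1 + b + (i + 1 + a) - i = (i + 1 + a) + (b + 1) by omega, vv_mul_habiroRoot_sub,
    habiroCoeff_eq (a := b) (b := a) rfl rfl,
    habiroCoeff_eq (a := b + 1) (b := a + 1) (by ring) (by ring),
    habiroCoeff_eq (a := b) (b := a + 1) rfl (by ring),
    show qFactF (i + 1 + b + (i + 1 + a + 1)) = qFactF (i + 1 + b + (i + 1 + a) + 1) from rfl,
    qFactF_succ (i + 1 + b + (i + 1 + a)), qFactF_succ i, qFactF_succ a, qFactF_succ b]
  have := qIntF_natCast_ne_zero (i + 1 + a).succ_ne_zero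
  have := qIntF_natCast_ne_zero i.succ_ne_zero
  have := qIntF_natCast_ne_zero a.succ_ne_zero
  have := qIntF_natCast_ne_zero b.succ_ne_zero
  have := qq_ne_zero
  field_simp [qFactF_ne_zero]
  simp only [qIntF_natCast]
  ring

lemma habiroCoeff_succ_self {m n : ℕ} (h : n < m) :
    habiroCoeff n m n / qIntF (n + 1 : ℕ) * (vv * (habiroRoot m - habiroRoot n)) =
      habiroCoeff (n + 1) m (n + 1) := by
  obtain ⟨b, rfl⟩ : ∃ b, m = n + 1 + b := ⟨m - (n + 1), by omega⟩
  rw [show n + 1 + b = n + (b + 1) by omega, vv_mul_habiroRoot_sub,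
    habiroCoeff_eq (k := n) (a := b + 1) (b := 0) rfl (add_zero n),
    habiroCoeff_eq (k := n + 1) (a := b) (b := 0) (by ring) (add_zero _),
    show qFactF (n + (b + 1) + (n + 1)) = qFactF (n + (b + 1) + n + 1) from rfl,
    qFactF_succ (n + (b + 1) + n), qFactF_succ n, qFactF_succ b]
  have := qIntF_natCast_ne_zero n.succ_ne_zero
  have := qIntF_natCast_ne_zero b.succ_ne_zero
  have := qq_ne_zero
  field_simp [qFactF_ne_zero]
  simp only [qIntF_natCast]
  ring

lemma Pt_mul_Pt_of_le {n m : ℕ} (h : n ≤ m) :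
    Pt m * Pt n = ∑ k ∈ range (n + 1), C (habiroCoeff k m n) * Pt (m + n - k) := by
  induction n with
  | zero =>
    rw [sum_range_one, Pt_zero, mul_one, habiroCoeff_eq (zero_add m) (zero_add 0)]
    simp [qFactF_zero, qFactF_ne_zero]
  | succ n ih =>
    calc Pt m * Pt (n + 1)
        = ∑ k ∈ range (n + 1), C (vv * (habiroCoeff k m n / qIntF (n + 1 : ℕ))) *
            ((X - C (habiroRoot n)) * Pt (m + n - k)) := by
          rw [Pt_succ, mul_left_comm, mul_left_comm (Pt m), ih (by omega), mul_sum, mul_sum]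
          refine sum_congr rfl fun k _ => ?_
          rw [mul_div_left_comm, C_mul]
          ring
      _ = ∑ k ∈ range (n + 1), C (habiroCoeff k m n / qIntF (n + 1 : ℕ) *
              qIntF (m + n - k + 1 : ℕ)) * Pt (m + n - k + 1) +
          ∑ k ∈ range (n + 1), C (habiroCoeff k m n / qIntF (n + 1 : ℕ) *
              (vv * (habiroRoot (m + n - k) - habiroRoot n))) * Pt (m + n - k) := by
          rw [← sum_add_distrib]
          exact sum_congr rfl fun k _ => C_mul_X_sub_C_habiroRoot_mul_Pt _ _ _
      _ = ∑ k ∈ range (n + 2), C (habiroCoeff k m (n + 1)) * Pt (m + (n + 1) - k) := by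
          refine sum_range_succ_add_sum_range_succ _ _ _ n ?_ (fun i hi => ?_) ?_
          · rw [Nat.sub_zero, Nat.sub_zero, habiroCoeff_zero_succ, add_assoc]
          · rw [show m + n - (i + 1) + 1 = m + n - i by omega,
              show m + (n + 1) - (i + 1) = m + n - i by omega, ← add_mul, ← C_add,
              habiroCoeff_succ_succ (by omega) hi]
          · rw [Nat.add_sub_cancel, habiroCoeff_succ_self h, Nat.add_sub_cancel]

theorem Pt_mul_Pt (m n : ℕ) :
    Pt m * Pt n = ∑ k ∈ range (min m n + 1), C (habiroCoeff k m n) * Pt (m + n - k) := by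
  rcases le_total n m with h | h
  · rw [min_eq_right h]
    exact Pt_mul_Pt_of_le h
  · rw [min_eq_left h, mul_comm, Pt_mul_Pt_of_le h]
    refine sum_congr rfl fun k _ => ?_
    rw [habiroCoeff_comm, add_comm n m]

lemma qFact_sub_mul_qFact_mem_Iideal {k n : ℕ} (h : k ≤ n) :
    qFact (n - k) * qFact k ∈ Iideal n :=
  Ideal.subset_span ⟨k, h, rfl⟩

theorem stmt18 :
    (∀ m n : ℕ,
      Pt m * Pt n =
        ∑ k ∈ range (min m n + 1),
          C (qq ^ (-((k : ℤ) * ((m : ℤ) + n - k))) *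
              (qFactF (m + n) / (qFactF k * qFactF (m - k) * qFactF (n - k)))) *
            Pt (m + n - k)) ∧
    (∀ m n k : ℕ, k ≤ m → k ≤ n →
      -- g = {2m+1}_{q,m+1}/{1}_q , b₁ = [2l+1 choose 2m+1]_q , b₂ = [2(n-k) choose n-k]_q ,
      -- b₃ = [m+n choose k]_q , b₄ = [m choose k]_q , where l = m+n-k
      ∀ g b₁ b₂ b₃ b₄ : LaurentPolynomial ℤ,
        g * qInt 1 = qPoch (2 * m + 1) (m + 1) →
        b₁ * qFact (2 * m + 1) = qPoch (2 * (m + n - k) + 1) (2 * m + 1) →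
        b₂ * qFact (n - k) = qPoch (2 * (n - k)) (n - k) →
        b₃ * qFact k = qPoch (m + n) k →
        b₄ * qFact k = qPoch m k →
        g * qFact k * qFact (n - k) * b₁ * b₂ * b₃ * b₄ ∈ Ideal.span {g} * Iideal n) := by
  refine ⟨Pt_mul_Pt, fun m n k _ hkn g b₁ b₂ b₃ b₄ _ _ _ _ _ => ?_⟩
  have hg := Ideal.mul_mem_mul (Ideal.mem_span_singleton_self g)
    (qFact_sub_mul_qFact_mem_Iideal hkn)
  convert Ideal.mul_mem_left _ (b₁ * b₂ * b₃ * b₄) hg using 1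
  ring
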